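/- arXiv:1701.01111 — 2 statements merged into one kernel-verified Lean document; each statement's English description precedes it below -/
import Mathlib

section
/- Let n ≥ 2 be a natural number. The n-th Kolmogorov number of the Volterra operator V : L¹(0,1) → C[0,1] equals 1/2, i.e., the infimum over all subspaces N of C[0,1] with dimension < n of sup{inf{‖Vf − g‖_∞ : g ∈ N} : ‖f‖₁ ≤ 1} equals 1/2. -/
/-!
For `‖f‖₁ ≤ 1` the oscillation of `V f` is at most `1`, so `V f` lies within `1/2` of a constant:
the constants, a one-dimensional subspace, give `d_n(V) ≤ 1/2`.

Conversely, `f_k = 2^(k+1) · 𝟙_(2^-(k+1), 2^-k)` has unit norm, and `V f_k` vanishes at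
`2^-(k+1)` while `V f_l = 1` there for `l > k`, so the `V f_k` are pairwise at distance `≥ 1`.
If a finite-dimensional `N` approximated all of them within `ρ`, the approximants would form a
bounded sequence in `N`, two of which are arbitrarily close by compactness; the triangle
inequality then gives `1 ≤ 2ρ`.
-/

open MeasureTheory

noncomputable section

/-- The space `L¹(0,1)` of Lebesgue integrable functions on `(0,1)`. -/
abbrev L1 : Type := Lp ℝ 1 ((volume : Measure ℝ).restrict (Set.Ioo (0:ℝ) 1))

/-- The space `C[0,1]` of continuous real functions on `[0,1]` with the supremum norm. -/
abbrev C01 : Type := C(Set.Icc (0:ℝ) 1, ℝ)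

/-- `V` is the Volterra operator: `(V f)(t) = ∫₀ᵗ f(s) ds` for `f ∈ L¹(0,1)`. -/
def IsVolterra (V : L1 →L[ℝ] C01) : Prop :=
  ∀ f : L1, ∀ t : Set.Icc (0:ℝ) 1,
    V f t = ∫ s in Set.Ioo (0:ℝ) (t:ℝ), f s
      ∂((volume : Measure ℝ).restrict (Set.Ioo (0:ℝ) 1))

open Metric Set

theorem exists_lt_dist_lt_of_isBounded_range {α : Type*} [PseudoMetricSpace α] [ProperSpace α]
    {u : ℕ → α} (hu : Bornology.IsBounded (range u)) {ε : ℝ} (hε : 0 < ε) :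
    ∃ k l, k < l ∧ dist (u k) (u l) < ε := by
  obtain ⟨_, -, φ, hφ, hlim⟩ := tendsto_subseq_of_bounded hu (mem_range_self ·)
  obtain ⟨m, hm⟩ := Metric.cauchySeq_iff'.mp hlim.cauchySeq ε hε
  exact ⟨φ m, φ (m + 1), hφ m.lt_succ_self, by rw [dist_comm]; exact hm (m + 1) m.le_succ⟩

theorem le_two_mul_of_forall_infDist_le {F : Type*} [NormedAddCommGroup F] [NormedSpace ℝ F]
    (N : Submodule ℝ F) [FiniteDimensional ℝ N] {x : ℕ → F}
    (hx : Bornology.IsBounded (range x)) {δ ρ : ℝ} (hsep : ∀ k l, k < l → δ ≤ dist (x k) (x l))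
    (happrox : ∀ k, infDist (x k) N ≤ ρ) : δ ≤ 2 * ρ := by
  refine le_of_forall_pos_lt_add fun ε hε => ?_
  have hnear : ∀ k, ∃ g : N, dist (x k) g < ρ + ε / 3 := fun k => by
    obtain ⟨g, hg, hdist⟩ :=
      (infDist_lt_iff ⟨0, N.zero_mem⟩).mp
        ((happrox k).trans_lt (lt_add_of_pos_right ρ (by positivity : 0 < ε / 3)))
    exact ⟨⟨g, hg⟩, hdist⟩
  choose g hg using hnear
  obtain ⟨C, hC⟩ := isBounded_iff_forall_norm_le.mp hx
  have hg_bdd : Bornology.IsBounded (range g) := by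
    refine isBounded_iff_forall_norm_le.mpr ⟨C + (ρ + ε / 3), ?_⟩
    rintro _ ⟨k, rfl⟩
    calc ‖g k‖ = ‖(g k : F)‖ := rfl
      _ ≤ ‖x k‖ + dist (x k) (g k) := by
          rw [dist_comm, dist_eq_norm]; exact norm_le_insert' _ _
      _ ≤ C + (ρ + ε / 3) := add_le_add (hC _ ⟨k, rfl⟩) (hg k).le
  obtain ⟨k, l, hkl, hgkl⟩ :=
    exists_lt_dist_lt_of_isBounded_range hg_bdd (by positivity : 0 < ε / 3)
  calc δ ≤ dist (x k) (x l) := hsep k l hkl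
    _ ≤ dist (x k) (g k) + dist (g k : F) (g l) + dist (g l : F) (x l) := dist_triangle4 _ _ _ _
    _ < (ρ + ε / 3) + ε / 3 + (ρ + ε / 3) := by
        rw [dist_comm (g l : F)]
        exact add_lt_add (add_lt_add (hg k) hgkl) (hg l)
    _ = 2 * ρ + ε := by ring

theorem sInf_norm_sub_eq_infDist {F : Type*} [SeminormedAddCommGroup F] (x : F) (s : Set F) :
    sInf {d : ℝ | ∃ g ∈ s, d = ‖x - g‖} = infDist x s := by
  rw [infDist_eq_iInf, iInf]
  congr 1
  ext d
  simp [dist_eq_norm, eq_comm]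

theorem ContinuousMap.exists_norm_sub_const_le {X : Type*} [TopologicalSpace X] [CompactSpace X]
    [Nonempty X] (h : C(X, ℝ)) {D : ℝ} (hD : ∀ s t, h t - h s ≤ D) :
    ∃ c : ℝ, ‖h - const X c‖ ≤ D / 2 := by
  obtain ⟨tmax, -, hmax⟩ := isCompact_univ.exists_isMaxOn univ_nonempty h.continuous.continuousOn
  obtain ⟨tmin, -, hmin⟩ := isCompact_univ.exists_isMinOn univ_nonempty h.continuous.continuousOn
  have hD0 : 0 ≤ D := by simpa using hD tmax tmax
  refine ⟨(h tmax + h tmin) / 2, (norm_le _ (by positivity)).mpr fun t => ?_⟩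
  have hle_max : h t ≤ h tmax := hmax (mem_univ t)
  have hmin_le : h tmin ≤ h t := hmin (mem_univ t)
  have hosc := hD tmin tmax
  rw [sub_apply, const_apply, Real.norm_eq_abs, abs_le]
  constructor <;> linarith

theorem norm_setIntegral_sub_setIntegral_le {α E : Type*} [MeasurableSpace α] {μ : Measure α}
    [NormedAddCommGroup E] [NormedSpace ℝ E] {f : α → E} (hf : Integrable f μ) {s t : Set α}
    (hs : MeasurableSet s) (hst : s ⊆ t) :
    ‖∫ a in t, f a ∂μ - ∫ a in s, f a ∂μ‖ ≤ ∫ a, ‖f a‖ ∂μ := by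
  rw [← setIntegral_sdiff hs hf.integrableOn hst]
  exact (norm_integral_le_integral_norm _).trans
    (setIntegral_le_integral hf.norm (.of_forall fun _ => norm_nonneg _))

section Deviation

variable {E F : Type*} [SeminormedAddCommGroup E] [NormedSpace ℝ E]
  [SeminormedAddCommGroup F] [NormedSpace ℝ F] (T : E →L[ℝ] F)

def deviation (N : Submodule ℝ F) : ℝ :=
  sSup {s : ℝ | ∃ x : E, ‖x‖ ≤ 1 ∧ s = infDist (T x) N}

def kolmogorovNumber (n : ℕ) : ℝ :=
  sInf {r : ℝ | ∃ N : Submodule ℝ F, Module.rank ℝ N < n ∧ r = deviation T N}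

variable {T} {N : Submodule ℝ F}

theorem infDist_le_deviation {x : E} (hx : ‖x‖ ≤ 1) : infDist (T x) N ≤ deviation T N := by
  refine le_csSup ⟨‖T‖, ?_⟩ ⟨x, hx, rfl⟩
  rintro _ ⟨y, hy, rfl⟩
  calc infDist (T y) N ≤ dist (T y) 0 := infDist_le_dist_of_mem N.zero_mem
    _ ≤ ‖T‖ := by simpa using T.le_opNorm_of_le hy

theorem deviation_nonneg : 0 ≤ deviation T N :=
  infDist_nonneg.trans (infDist_le_deviation (x := 0) (by simp))

theorem deviation_le {c : ℝ} (h : ∀ x, ‖x‖ ≤ 1 → infDist (T x) N ≤ c) : deviation T N ≤ c :=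
  csSup_le ⟨_, 0, by simp, rfl⟩ (by rintro _ ⟨x, hx, rfl⟩; exact h x hx)

theorem kolmogorovNumber_le {n : ℕ} (hN : Module.rank ℝ N < n) :
    kolmogorovNumber T n ≤ deviation T N :=
  csInf_le ⟨0, by rintro _ ⟨N, -, rfl⟩; exact deviation_nonneg⟩ ⟨N, hN, rfl⟩

theorem le_kolmogorovNumber {n : ℕ} (hn : n ≠ 0) {c : ℝ}
    (h : ∀ N : Submodule ℝ F, Module.rank ℝ N < n → c ≤ deviation T N) :
    c ≤ kolmogorovNumber T n :=
  le_csInf ⟨_, ⊥, by simp [Nat.pos_of_ne_zero hn], rfl⟩ (by rintro _ ⟨N, hN, rfl⟩; exact h N hN)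

end Deviation

local notation "μ₀₁" => Measure.restrict (volume : Measure ℝ) (Ioo (0:ℝ) 1)

def normalizedIndicator (a b : ℝ) : L1 :=
  indicatorConstLp 1 (measurableSet_Ioo (a := a) (b := b)) (measure_ne_top _ _) (b - a)⁻¹

theorem measureReal_restrict_Ioo_zero_one {a b : ℝ} (ha : 0 ≤ a) (hab : a ≤ b) (hb : b ≤ 1) :
    (μ₀₁).real (Ioo a b) = b - a := by
  rw [measureReal_restrict_apply measurableSet_Ioo, inter_eq_left.mpr (Ioo_subset_Ioo ha hb),
    Real.volume_real_Ioo_of_le hab]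

theorem norm_normalizedIndicator {a b : ℝ} (ha : 0 ≤ a) (hab : a < b) (hb : b ≤ 1) :
    ‖normalizedIndicator a b‖ = 1 := by
  rw [normalizedIndicator, norm_indicatorConstLp one_ne_zero ENNReal.one_ne_top,
    measureReal_restrict_Ioo_zero_one ha hab.le hb, Real.norm_of_nonneg (by simpa using hab.le)]
  simp [inv_mul_cancel₀ (sub_pos.mpr hab).ne']

section Volterra

variable {V : L1 →L[ℝ] C01}

theorem IsVolterra.apply_normalizedIndicator_of_le_left (hV : IsVolterra V) {a b : ℝ}
    {t : Icc (0:ℝ) 1} (ht : (t : ℝ) ≤ a) : V (normalizedIndicator a b) t = 0 := by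
  have hdisj : Ioo a b ∩ Ioo 0 (t : ℝ) = ∅ :=
    eq_empty_of_forall_notMem fun x hx => (hx.1.1.trans hx.2.2).not_ge ht
  rw [hV, normalizedIndicator, setIntegral_indicatorConstLp measurableSet_Ioo, hdisj]
  simp

theorem IsVolterra.apply_normalizedIndicator_of_right_le (hV : IsVolterra V) {a b : ℝ}
    (ha : 0 ≤ a) (hab : a < b) {t : Icc (0:ℝ) 1} (ht : b ≤ t) :
    V (normalizedIndicator a b) t = 1 := by
  have hsub : Ioo a b ∩ Ioo 0 (t : ℝ) = Ioo a b :=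
    inter_eq_left.mpr (Ioo_subset_Ioo ha ht)
  rw [hV, normalizedIndicator, setIntegral_indicatorConstLp measurableSet_Ioo, hsub,
    measureReal_restrict_Ioo_zero_one ha hab.le (ht.trans t.2.2), smul_eq_mul,
    mul_inv_cancel₀ (sub_pos.mpr hab).ne']

theorem IsVolterra.apply_sub_apply_le (hV : IsVolterra V) (f : L1) (s t : Icc (0:ℝ) 1) :
    V f t - V f s ≤ ‖f‖ := by
  have hdiff : ∀ {u v : ℝ}, u ≤ v →
      ‖∫ x in Ioo 0 v, f x ∂μ₀₁ - ∫ x in Ioo 0 u, f x ∂μ₀₁‖ ≤ ‖f‖ := fun huv =>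
    (L1.norm_eq_integral_norm f).symm ▸ norm_setIntegral_sub_setIntegral_le
      (L1.integrable_coeFn f) measurableSet_Ioo (Ioo_subset_Ioo_right huv)
  rw [hV, hV]
  rcases le_total (s : ℝ) t with h | h
  · exact (Real.le_norm_self _).trans (hdiff h)
  · exact (Real.le_norm_self _).trans ((norm_sub_rev _ _).trans_le (hdiff h))

theorem IsVolterra.deviation_span_const_le (hV : IsVolterra V) :
    deviation V (Submodule.span ℝ {ContinuousMap.const _ 1}) ≤ 1 / 2 := by
  refine deviation_le fun f hf => ?_
  obtain ⟨c, hc⟩ :=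
    (V f).exists_norm_sub_const_le fun s t => (hV.apply_sub_apply_le f s t).trans hf
  have hc_mem : ContinuousMap.const _ c ∈
      Submodule.span ℝ {ContinuousMap.const (Icc (0:ℝ) 1) (1:ℝ)} :=
    Submodule.mem_span_singleton.mpr ⟨c, by ext; simp⟩
  exact (infDist_le_dist_of_mem hc_mem).trans (by rwa [dist_eq_norm])

theorem IsVolterra.half_le_deviation (hV : IsVolterra V) (N : Submodule ℝ C01)
    [FiniteDimensional ℝ N] : 1 / 2 ≤ deviation V N := by
  have h2 : (0:ℝ) < 2⁻¹ := by norm_num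
  have h2' : (2⁻¹ : ℝ) < 1 := by norm_num
  let f (k : ℕ) : L1 := normalizedIndicator (2⁻¹ ^ (k + 1)) (2⁻¹ ^ k)
  have hf : ∀ k, ‖f k‖ = 1 := fun k => norm_normalizedIndicator (by positivity)
    (pow_lt_pow_right_of_lt_one₀ h2 h2' k.lt_succ_self) (pow_le_one₀ h2.le h2'.le)
  have hsep : ∀ k l, k < l → 1 ≤ dist (V (f k)) (V (f l)) := fun k l hkl => by
    let τ : Icc (0:ℝ) 1 := ⟨2⁻¹ ^ (k + 1), by positivity, pow_le_one₀ h2.le h2'.le⟩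
    have hk : V (f k) τ = 0 := hV.apply_normalizedIndicator_of_le_left le_rfl
    have hl : V (f l) τ = 1 := hV.apply_normalizedIndicator_of_right_le (by positivity)
      (pow_lt_pow_right_of_lt_one₀ h2 h2' l.lt_succ_self) (pow_le_pow_of_le_one h2.le h2'.le hkl)
    calc (1:ℝ) = dist (V (f k) τ) (V (f l) τ) := by rw [hk, hl]; norm_num
      _ ≤ dist (V (f k)) (V (f l)) := ContinuousMap.dist_apply_le_dist τ
  have hbdd : Bornology.IsBounded (range fun k => V (f k)) := by
    refine isBounded_iff_forall_norm_le.mpr ⟨‖V‖, ?_⟩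
    rintro _ ⟨k, rfl⟩
    simpa using V.le_opNorm_of_le (hf k).le
  linarith [le_two_mul_of_forall_infDist_le N hbdd hsep
    fun k => infDist_le_deviation (T := V) (hf k).le]

end Volterra

/-- The `n`-th Kolmogorov number of the Volterra operator `V : L¹(0,1) → C[0,1]`
equals `1/2` for `n ≥ 2`. -/
theorem kolmogorov_number_volterra (n : ℕ) (hn : 2 ≤ n)
    (V : L1 →L[ℝ] C01) (hV : IsVolterra V) :
    sInf {r : ℝ | ∃ N : Submodule ℝ C01, Module.rank ℝ N < (n : Cardinal) ∧
        r = sSup {s : ℝ | ∃ f : L1, ‖f‖ ≤ 1 ∧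
          s = sInf {d : ℝ | ∃ g ∈ N, d = ‖V f - g‖}}} = 1 / 2 := by
  simp_rw [← SetLike.mem_coe, sInf_norm_sub_eq_infDist]
  change kolmogorovNumber V n = 1 / 2
  refine le_antisymm ((kolmogorovNumber_le ?_).trans hV.deviation_span_const_le)
    (le_kolmogorovNumber (by omega) fun N hN => ?_)
  · calc Module.rank ℝ (Submodule.span ℝ {ContinuousMap.const (Icc (0:ℝ) 1) (1:ℝ)})
        ≤ 1 := (rank_span_le _).trans (Cardinal.mk_singleton _).le
      _ < n := by exact_mod_cast hn
  · have : FiniteDimensional ℝ N :=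
      Module.rank_lt_aleph0_iff.mp (hN.trans Cardinal.natCast_lt_aleph0)
    exact hV.half_le_deviation N
end
end

section
/- There exists a bounded linear operator ϱ : ℓ¹ → c of rank at most 1 such that ‖σ − ϱ‖ ≤ 1/2; namely ϱ defined by ϱ(x)_k = (1/2) ∑_{j=1}^∞ x_j for all k ∈ ℕ satisfies ‖σ(x) − ϱ(x)‖_∞ ≤ (1/2)‖x‖₁ for every x ∈ ℓ¹. (Consequently the n-th approximation number of σ satisfies a_n(σ) ≤ 1/2 for every n ≥ 2.) -/
/-!
Split `∑' j, x j = A + B` into the first `k + 1` terms `A` and the tail `B`. Then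
`σ(x)ₖ - ϱ(x)ₖ = A - (A + B) / 2 = (A - B) / 2`, and `|A - B| ≤ |A| + |B| ≤ ‖x‖₁`.
Since `ϱ` factors through the scalar `∑' j, x j`, it has rank at most one.
-/

noncomputable section

/-- The space `ℓ¹` of absolutely summable real sequences. -/
abbrev ell1 : Type := lp (fun _ : ℕ => ℝ) 1

/-- The space `ℓ^∞` of bounded real sequences with the supremum norm. -/
abbrev ellInf : Type := lp (fun _ : ℕ => ℝ) ⊤

/-- The subspace of `ℓ^∞` consisting of convergent sequences. -/
def convSubspace : Submodule ℝ ellInf where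
  carrier := {x | ∃ L : ℝ, Filter.Tendsto (fun k => x k) Filter.atTop (nhds L)}
  add_mem' := by
    rintro x y ⟨L, hL⟩ ⟨M, hM⟩
    exact ⟨L + M, by simpa [lp.coeFn_add, Pi.add_apply] using hL.add hM⟩
  zero_mem' :=
    ⟨0, by simpa [lp.coeFn_zero] using
      (tendsto_const_nhds : Filter.Tendsto (fun _ : ℕ => (0:ℝ)) _ _)⟩
  smul_mem' := by
    rintro c x ⟨L, hL⟩
    exact ⟨c * L, by simpa [lp.coeFn_smul, Pi.smul_apply, smul_eq_mul] using hL.const_mul c⟩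

/-- The space `c` of convergent real sequences, normed by the supremum norm. -/
abbrev cSpace : Type := ↥convSubspace

/-- `σ` is the summation operator: `σ(x)ₖ = ∑_{j=1}^k x_j` (`0`-indexed here). -/
def IsSummation (σ : ell1 →L[ℝ] cSpace) : Prop :=
  ∀ x : ell1, ∀ k : ℕ, (↑(σ x) : ellInf) k = ∑ j ∈ Finset.range (k + 1), x j

theorem norm_sum_sub_half_tsum_le {ι E : Type*} [NormedAddCommGroup E] [NormedSpace ℝ E]
    [CompleteSpace E] {f : ι → E} (hf : Summable fun i => ‖f i‖) (s : Finset ι) :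
    ‖∑ i ∈ s, f i - (2⁻¹ : ℝ) • ∑' i, f i‖ ≤ 2⁻¹ * ∑' i, ‖f i‖ := by
  set A := ∑ i ∈ s, f i
  set B := ∑' i : ↥(s : Set ι)ᶜ, f i
  have hsplit : ∑' i, f i = A + B := hf.of_norm.sum_add_tsum_compl.symm
  have hsplit_norm : ∑' i, ‖f i‖ = ∑ i ∈ s, ‖f i‖ + ∑' i : ↥(s : Set ι)ᶜ, ‖f i‖ :=
    hf.sum_add_tsum_compl.symm
  have hA : ‖A‖ ≤ ∑ i ∈ s, ‖f i‖ := norm_sum_le s f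
  have hB : ‖B‖ ≤ ∑' i : ↥(s : Set ι)ᶜ, ‖f i‖ :=
    norm_tsum_le_tsum_norm (hf.subtype _)
  calc ‖A - (2⁻¹ : ℝ) • ∑' i, f i‖ = 2⁻¹ * ‖A - B‖ := by
        rw [hsplit, show A - (2⁻¹ : ℝ) • (A + B) = (2⁻¹ : ℝ) • (A - B) by module, norm_smul,
          Real.norm_of_nonneg (by norm_num)]
    _ ≤ 2⁻¹ * (‖A‖ + ‖B‖) := by gcongr; exact norm_sub_le A B
    _ ≤ 2⁻¹ * ∑' i, ‖f i‖ := by rw [hsplit_norm]; gcongr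

namespace ell1

theorem summable_norm (x : ell1) : Summable fun j => ‖x j‖ := by
  simpa using (lp.memℓp x).summable (p := 1) (by norm_num)

theorem norm_eq_tsum_norm (x : ell1) : ‖x‖ = ∑' j, ‖x j‖ := by
  simpa using lp.norm_eq_tsum_rpow (p := 1) (by norm_num) x

def sumCLM : ell1 →L[ℝ] ℝ :=
  LinearMap.mkContinuous
    { toFun := fun x => ∑' j, x j
      map_add' := fun x y => (summable_norm x).of_norm.tsum_add (summable_norm y).of_norm
      map_smul' := fun c x => (summable_norm x).of_norm.tsum_mul_left c }
    1 fun x => by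
      rw [one_mul, norm_eq_tsum_norm]
      exact norm_tsum_le_tsum_norm (summable_norm x)

@[simp]
theorem sumCLM_apply (x : ell1) : sumCLM x = ∑' j, x j := rfl

end ell1

namespace cSpace

def constCLM : ℝ →L[ℝ] cSpace :=
  ContinuousLinearMap.toSpanSingleton ℝ ⟨1, 1, by simp⟩

@[simp]
theorem constCLM_apply (c : ℝ) (k : ℕ) : (constCLM c : ellInf) k = c := by
  simp [constCLM]

end cSpace

def halfSumCLM : ell1 →L[ℝ] cSpace := cSpace.constCLM.comp ((2⁻¹ : ℝ) • ell1.sumCLM)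

theorem halfSumCLM_apply (x : ell1) (k : ℕ) :
    (halfSumCLM x : ellInf) k = (1 / 2) * ∑' j, x j := by
  simp [halfSumCLM]

theorem rank_halfSumCLM_le_one : LinearMap.rank (halfSumCLM : ell1 →ₗ[ℝ] cSpace) ≤ 1 :=
  calc LinearMap.rank (halfSumCLM : ell1 →ₗ[ℝ] cSpace)
      ≤ LinearMap.rank (cSpace.constCLM : ℝ →ₗ[ℝ] cSpace) := LinearMap.rank_comp_le_left _ _
    _ ≤ Module.rank ℝ ℝ := LinearMap.rank_le_domain _
    _ = 1 := Module.rank_self ℝ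

theorem IsSummation.norm_sub_halfSumCLM_le {σ : ell1 →L[ℝ] cSpace} (hσ : IsSummation σ)
    (x : ell1) : ‖σ x - halfSumCLM x‖ ≤ (1 / 2) * ‖x‖ := by
  rw [Submodule.coe_norm]
  refine lp.norm_le_of_forall_le (by positivity) fun k => ?_
  have := norm_sum_sub_half_tsum_le (ell1.summable_norm x) (Finset.range (k + 1))
  simpa [hσ x k, halfSumCLM_apply, ell1.norm_eq_tsum_norm] using this

/-- Upper bound for the approximation numbers of the summation operator: the rank-one
operator `ϱ(x)ₖ ≡ (1/2)∑_j x_j` satisfies `‖σ(x) - ϱ(x)‖_∞ ≤ (1/2)‖x‖₁` for all `x`,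
and hence `‖σ - ϱ‖ ≤ 1/2`. -/
theorem approximation_upper_bound_summation (σ : ell1 →L[ℝ] cSpace) (hσ : IsSummation σ) :
    ∃ ϱ : ell1 →L[ℝ] cSpace,
      LinearMap.rank (ϱ : ell1 →ₗ[ℝ] cSpace) ≤ 1 ∧
      (∀ x : ell1, ∀ k : ℕ, (↑(ϱ x) : ellInf) k = (1 / 2) * ∑' j : ℕ, x j) ∧
      (∀ x : ell1, ‖σ x - ϱ x‖ ≤ (1 / 2) * ‖x‖) ∧
      ‖σ - ϱ‖ ≤ 1 / 2 :=
  ⟨halfSumCLM, rank_halfSumCLM_le_one, halfSumCLM_apply, hσ.norm_sub_halfSumCLM_le,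
    ContinuousLinearMap.opNorm_le_bound _ (by norm_num) fun x =>
      hσ.norm_sub_halfSumCLM_le x⟩
end
end
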